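/- Let s ∈ (0, 1/2) with t₁(s) = 7 + 3^{3−2s} − 2^{5−2s} > 0 (i.e. s ∈ (0, s₀) where s₀ is the unique zero of t₁ in (0,1/2)). Let h > 0, let N ≥ 2 be an integer, and let S be the (N−1)×(N−1) matrix with entries S_{kj} = A_s h^{1−2s} t_{|k−j|}(s). Then 0 < t₁(s) < 2; S_{kk} > 0 for all k; S_{kj} > 0 when |k−j| = 1; S_{kj} < 0 when |k−j| ≥ 2; and for every 1 ≤ k ≤ N−1, S_{kk} − Σ_{j≠k} |S_{kj}| > −4 A_s t₁(s) h^{1−2s}. -/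

import Mathlib

/-- `t_p(s)`, with the convention `0^(3-2s) = 0` (automatic for `rpow`). -/
noncomputable def tFn (s : ℝ) (p : ℕ) : ℝ :=
  |(p : ℝ) - 2| ^ (3 - 2 * s) - 4 * |(p : ℝ) - 1| ^ (3 - 2 * s) + 6 * (p : ℝ) ^ (3 - 2 * s)
    - 4 * ((p : ℝ) + 1) ^ (3 - 2 * s) + ((p : ℝ) + 2) ^ (3 - 2 * s)

/-- `t₁(s) = 7 + 3^(3-2s) - 2^(5-2s)`. -/
noncomputable def t1 (s : ℝ) : ℝ := 7 + (3 : ℝ) ^ (3 - 2 * s) - (2 : ℝ) ^ (5 - 2 * s)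

/-- `A_s = 1/(2 Γ(4-2s) cos(sπ))`. -/
noncomputable def Acoef (s : ℝ) : ℝ := 1 / (2 * Real.Gamma (4 - 2 * s) * Real.cos (s * Real.pi))

/-! Write `a = 3 - 2s ∈ (2, 3)` and `f x = x ^ a`. For `p ≥ 2`, `t_p = Δ⁴f (p - 2)` (forward
differences with step `1`), and this is negative because `Δ²f` is strictly concave (`f⁽⁴⁾ < 0`).
Likewise `Δ³f > 0` on `[0, ∞)` because `Δf` is strictly convex. So
`|t_p| = Δ³f (p - 2) - Δ³f (p - 1)` telescopes, and each of the two halves of an off-diagonal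
row sum is below `t₁ + Δ³f 0 = t₀ / 2 + 2 t₁`. Finally `t₁ < 2` is convexity of
`a ↦ (3/2)^a + 5 (1/2)^a` between `a = 2` and `a = 3`. -/

open Real Set Finset
open scoped fwdDiff

theorem StrictConvexOn.const_mul {s : Set ℝ} {f : ℝ → ℝ} (hf : StrictConvexOn ℝ s f) {c : ℝ}
    (hc : 0 < c) : StrictConvexOn ℝ s fun x => c * f x := by
  refine ⟨hf.1, fun x hx y hy hxy a b ha hb hab => ?_⟩
  have := mul_lt_mul_of_pos_left (hf.2 hx hy hxy ha hb hab) hc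
  simp only [smul_eq_mul] at this ⊢
  linarith

theorem StrictConcaveOn.const_mul {s : Set ℝ} {f : ℝ → ℝ} (hf : StrictConcaveOn ℝ s f) {c : ℝ}
    (hc : 0 < c) : StrictConcaveOn ℝ s fun x => c * f x := by
  refine ⟨hf.1, fun x hx y hy hxy a b ha hb hab => ?_⟩
  have := mul_lt_mul_of_pos_left (hf.2 hx hy hxy ha hb hab) hc
  simp only [smul_eq_mul] at this ⊢
  linarith

section fwdDiff

variable {f f' : ℝ → ℝ}

theorem StrictConvexOn.strictMonoOn_fwdDiff (hf : StrictConvexOn ℝ (Ici 0) f) :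
    StrictMonoOn (Δ_[1] f) (Ici 0) := by
  intro x (hx : 0 ≤ x) y (hy : 0 ≤ y) hxy
  have hy1 : y + 1 ∈ Ici (0 : ℝ) := by simp only [Set.mem_Ici]; linarith
  have h1 := hf.secant_strict_mono_aux2 hx hy1 (lt_add_one x) (by linarith)
  have h2 := hf.secant_strict_mono_aux3 hx hy1 hxy (lt_add_one y)
  simp only [fwdDiff, add_sub_cancel_left, div_one] at h1 h2 ⊢
  exact h1.trans h2

theorem StrictConcaveOn.strictAntiOn_fwdDiff (hf : StrictConcaveOn ℝ (Ici 0) f) :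
    StrictAntiOn (Δ_[1] f) (Ici 0) := fun x hx y hy hxy => by
  have := hf.neg.strictMonoOn_fwdDiff hx hy hxy
  simp only [fwdDiff, Pi.neg_apply] at this ⊢
  linarith

theorem hasDerivAt_fwdDiff (hf : ∀ x, HasDerivAt f (f' x) x) (x : ℝ) :
    HasDerivAt (Δ_[1] f) (Δ_[1] f' x) x :=
  ((hf (x + 1)).comp_add_const x 1).sub (hf x)

theorem strictConvexOn_fwdDiff_of_hasDerivAt (hf : ∀ x, HasDerivAt f (f' x) x)
    (hf' : StrictConvexOn ℝ (Ici 0) f') : StrictConvexOn ℝ (Ici 0) (Δ_[1] f) := by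
  have hΔ := hasDerivAt_fwdDiff hf
  refine StrictMonoOn.strictConvexOn_of_deriv (convex_Ici 0)
    (fun x _ => (hΔ x).continuousAt.continuousWithinAt) ?_
  rw [interior_Ici]
  intro x hx y hy hxy
  rw [(hΔ x).deriv, (hΔ y).deriv]
  exact hf'.strictMonoOn_fwdDiff (Set.mem_Ici_of_Ioi hx) (Set.mem_Ici_of_Ioi hy) hxy

theorem strictConcaveOn_fwdDiff_of_hasDerivAt (hf : ∀ x, HasDerivAt f (f' x) x)
    (hf' : StrictConcaveOn ℝ (Ici 0) f') : StrictConcaveOn ℝ (Ici 0) (Δ_[1] f) := by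
  have := (strictConvexOn_fwdDiff_of_hasDerivAt (fun x => (hf x).neg) hf'.neg).neg
  have hneg : Δ_[1] (-f) = -Δ_[1] f := by
    ext x
    simp only [fwdDiff, Pi.neg_apply]
    ring
  rwa [hneg, neg_neg] at this

theorem StrictConvexOn.fwdDiff_iter_two_pos (hf : StrictConvexOn ℝ (Ici 0) f) {x : ℝ}
    (hx : 0 ≤ x) : 0 < Δ_[1] ^[2] f x := by
  have := hf.strictMonoOn_fwdDiff (Set.mem_Ici.2 hx) (Set.mem_Ici.2 (by linarith)) (lt_add_one x)
  rw [Function.iterate_succ_apply', Function.iterate_one]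
  exact sub_pos.2 this

theorem StrictConcaveOn.fwdDiff_iter_two_neg (hf : StrictConcaveOn ℝ (Ici 0) f) {x : ℝ}
    (hx : 0 ≤ x) : Δ_[1] ^[2] f x < 0 := by
  have := hf.strictAntiOn_fwdDiff (Set.mem_Ici.2 hx) (Set.mem_Ici.2 (by linarith)) (lt_add_one x)
  rw [Function.iterate_succ_apply', Function.iterate_one]
  exact sub_neg.2 this

end fwdDiff

theorem Finset.sum_filter_ne_natAbs_sub {M : Type*} [AddCommMonoid M] {n : ℕ} (g : ℕ → M)
    (k : Fin n) :
    ∑ j ∈ univ.filter (fun j => j ≠ k), g (((k : ℕ) : ℤ) - ((j : ℕ) : ℤ)).natAbs =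
      ∑ i ∈ range k, g (i + 1) + ∑ i ∈ range (n - 1 - k), g (i + 1) := by
  rw [Finset.sum_filter]
  obtain ⟨k, hk⟩ := k
  obtain ⟨m, rfl⟩ : ∃ m, n = k + 1 + m := ⟨n - 1 - k, by omega⟩
  have := Fin.sum_univ_eq_sum_range
    (fun i => if i ≠ k then g ((k : ℤ) - (i : ℤ)).natAbs else 0) (k + 1 + m)
  simp only [ne_eq, Fin.ext_iff] at this ⊢
  rw [this, Finset.sum_range_add, Finset.sum_range_succ, ← Finset.sum_range_reflect,
    if_neg (not_not.2 rfl), add_zero, show k + 1 + m - 1 - k = m by omega]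
  congr 1 <;> refine Finset.sum_congr rfl fun i hi => ?_ <;> rw [Finset.mem_range] at hi
  · rw [if_pos (by omega), show ((k : ℤ) - ((k - 1 - i : ℕ) : ℤ)).natAbs = i + 1 by omega]
  · rw [if_pos (by omega), show ((k : ℤ) - ((k + 1 + i : ℕ) : ℤ)).natAbs = i + 1 by omega]

section rpow

variable {a : ℝ}

theorem fwdDiff_iter_three_rpow_pos (ha : 2 < a) {x : ℝ} (hx : 0 ≤ x) :
    0 < Δ_[1] ^[3] (fun x : ℝ => x ^ a) x := by
  have hconv : StrictConvexOn ℝ (Ici 0) (Δ_[1] fun x : ℝ => x ^ a) :=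
    strictConvexOn_fwdDiff_of_hasDerivAt (fun x => hasDerivAt_rpow_const (Or.inr (by linarith)))
      ((strictConvexOn_rpow (by linarith)).const_mul (by linarith))
  rw [Function.iterate_succ_apply]
  exact hconv.fwdDiff_iter_two_pos hx

theorem fwdDiff_iter_four_rpow_neg (ha2 : 2 < a) (ha3 : a < 3) {x : ℝ} (hx : 0 ≤ x) :
    Δ_[1] ^[4] (fun x : ℝ => x ^ a) x < 0 := by
  have hd : ∀ x : ℝ, HasDerivAt (fun x => x ^ a) (a * x ^ (a - 1)) x :=
    fun x => hasDerivAt_rpow_const (Or.inr (by linarith))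
  have hd' : ∀ x : ℝ, HasDerivAt (fun x => a * x ^ (a - 1)) (a * ((a - 1) * x ^ (a - 1 - 1))) x :=
    fun x => (hasDerivAt_rpow_const (Or.inr (by linarith))).const_mul a
  have hconc : StrictConcaveOn ℝ (Ici 0) (Δ_[1] ^[2] fun x : ℝ => x ^ a) :=
    strictConcaveOn_fwdDiff_of_hasDerivAt (hasDerivAt_fwdDiff hd)
      (strictConcaveOn_fwdDiff_of_hasDerivAt hd'
        (((strictConcaveOn_rpow (by linarith) (by linarith)).const_mul (by linarith)).const_mul
          (by linarith)))
  rw [show 4 = 2 + 2 from rfl, Function.iterate_add_apply]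
  exact hconc.fwdDiff_iter_two_neg hx

end rpow

section tFn

variable {s : ℝ}

theorem tFn_eq_fwdDiff_iter_four {p : ℕ} (hp : 2 ≤ p) :
    tFn s p = Δ_[1] ^[4] (fun x : ℝ => x ^ (3 - 2 * s)) (p - 2) := by
  have hp' : (2 : ℝ) ≤ p := by exact_mod_cast hp
  rw [fwdDiff_iter_eq_sum_shift, tFn, abs_of_nonneg (by linarith : (0 : ℝ) ≤ p - 2),
    abs_of_nonneg (by linarith : (0 : ℝ) ≤ p - 1)]
  norm_num [Finset.sum_range_succ, Nat.choose]
  ring_nf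

theorem tFn_neg (hs0 : 0 < s) (hs : s < 1 / 2) {p : ℕ} (hp : 2 ≤ p) : tFn s p < 0 := by
  have hp' : (2 : ℝ) ≤ p := by exact_mod_cast hp
  rw [tFn_eq_fwdDiff_iter_four hp]
  exact fwdDiff_iter_four_rpow_neg (by linarith) (by linarith) (by linarith)

theorem tFn_add_two (n : ℕ) :
    tFn s (n + 2) = Δ_[1] ^[3] (fun x : ℝ => x ^ (3 - 2 * s)) (n + 1)
      - Δ_[1] ^[3] (fun x : ℝ => x ^ (3 - 2 * s)) n := by
  rw [tFn_eq_fwdDiff_iter_four (by omega), Function.iterate_succ_apply']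
  push_cast
  rw [add_sub_cancel_right, fwdDiff]

theorem sum_abs_tFn_add_two (hs0 : 0 < s) (hs : s < 1 / 2) (n : ℕ) :
    ∑ i ∈ range n, |tFn s (i + 2)| = Δ_[1] ^[3] (fun x : ℝ => x ^ (3 - 2 * s)) 0
      - Δ_[1] ^[3] (fun x : ℝ => x ^ (3 - 2 * s)) n := by
  have htel := Finset.sum_range_sub' (fun i : ℕ => Δ_[1] ^[3] (fun x : ℝ => x ^ (3 - 2 * s)) i) n
  rw [Nat.cast_zero] at htel
  rw [← htel]
  refine Finset.sum_congr rfl fun i _ => ?_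
  rw [abs_of_neg (tFn_neg hs0 hs (by omega)), tFn_add_two]
  push_cast
  ring

theorem t1_eq (s : ℝ) : t1 s = 7 + 3 ^ (3 - 2 * s) - 4 * 2 ^ (3 - 2 * s) := by
  rw [t1, show 5 - 2 * s = 2 + (3 - 2 * s) by ring, rpow_add two_pos]
  norm_num

theorem tFn_zero (hs : s < 3 / 2) : tFn s 0 = 2 * 2 ^ (3 - 2 * s) - 8 := by
  simp [tFn, zero_rpow (by linarith : 3 - 2 * s ≠ 0)]
  ring

theorem tFn_one (hs : s < 3 / 2) : tFn s 1 = t1 s := by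
  norm_num [tFn, t1_eq, zero_rpow (by linarith : 3 - 2 * s ≠ 0)]
  ring

theorem fwdDiff_iter_three_rpow_zero {a : ℝ} (ha : a ≠ 0) :
    Δ_[1] ^[3] (fun x : ℝ => x ^ a) 0 = 3 ^ a - 3 * 2 ^ a + 3 := by
  simp [fwdDiff_iter_eq_sum_shift, Finset.sum_range_succ, zero_rpow ha]
  ring

theorem tFn_zero_pos (hs : s < 1 / 2) : 0 < tFn s 0 := by
  have : (2 : ℝ) ^ (2 : ℝ) < 2 ^ (3 - 2 * s) := rpow_lt_rpow_of_exponent_lt one_lt_two (by linarith)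
  rw [tFn_zero (by linarith)]
  norm_num at this
  linarith

theorem sum_abs_tFn_succ_lt (hs0 : 0 < s) (hs : s < 1 / 2) (ht1 : 0 < t1 s) (m : ℕ) :
    ∑ i ∈ range m, |tFn s (i + 1)| < tFn s 0 / 2 + 2 * t1 s := by
  have hU := fwdDiff_iter_three_rpow_pos (a := 3 - 2 * s) (by linarith) (Nat.cast_nonneg m)
  calc ∑ i ∈ range m, |tFn s (i + 1)|
      ≤ ∑ i ∈ range (m + 1), |tFn s (i + 1)| := by
        rw [Finset.sum_range_succ]; linarith [abs_nonneg (tFn s (m + 1))]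
    _ = t1 s + Δ_[1] ^[3] (fun x : ℝ => x ^ (3 - 2 * s)) 0
          - Δ_[1] ^[3] (fun x : ℝ => x ^ (3 - 2 * s)) m := by
        rw [Finset.sum_range_succ', sum_abs_tFn_add_two hs0 hs, zero_add, tFn_one (by linarith),
          abs_of_pos ht1]
        ring
    _ < tFn s 0 / 2 + 2 * t1 s := by
        rw [fwdDiff_iter_three_rpow_zero (by linarith), tFn_zero (by linarith), t1_eq]
        linarith

end tFn

theorem sum_abs_tFn_row_lt {s : ℝ} (hs0 : 0 < s) (hs : s < 1 / 2) (ht1 : 0 < t1 s) {n : ℕ}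
    (k : Fin n) :
    ∑ j ∈ univ.filter (fun j => j ≠ k), |tFn s (((k : ℕ) : ℤ) - ((j : ℕ) : ℤ)).natAbs| <
      tFn s 0 + 4 * t1 s := by
  rw [Finset.sum_filter_ne_natAbs_sub fun p => |tFn s p|]
  linarith [sum_abs_tFn_succ_lt hs0 hs ht1 k, sum_abs_tFn_succ_lt hs0 hs ht1 (n - 1 - k)]

theorem t1_lt_two {s : ℝ} (hs0 : 0 < s) (hs : s ≤ 1 / 2) : t1 s < 2 := by
  set a := 3 - 2 * s with ha
  have hconv : ConvexOn ℝ univ fun x : ℝ => (3 / 2 : ℝ) ^ x + (5 : ℝ) • (1 / 2 : ℝ) ^ x :=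
    (convexOn_rpow_left (by norm_num)).add ((convexOn_rpow_left (by norm_num)).smul (by norm_num))
  have hg : (3 / 2 : ℝ) ^ a + 5 * (1 / 2 : ℝ) ^ a ≤ 4 - s := by
    have := hconv.2 (mem_univ 2) (mem_univ 3) (by linarith : 0 ≤ 2 * s)
      (by linarith : 0 ≤ 1 - 2 * s) (by ring)
    simp only [smul_eq_mul] at this
    rw [show 2 * s * 2 + (1 - 2 * s) * 3 = a by ring] at this
    norm_num at this
    linarith
  have h3 : (3 : ℝ) ^ a = (3 / 2) ^ a * 2 ^ a := by
    rw [← mul_rpow (by norm_num) (by norm_num)]; norm_num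
  have h1 : (1 / 2 : ℝ) ^ a * 2 ^ a = 1 := by
    rw [← mul_rpow (by norm_num) (by norm_num)]; norm_num
  rw [t1_eq, ← ha]
  nlinarith [rpow_pos_of_pos two_pos a]

theorem Acoef_pos {s : ℝ} (hs0 : -(1 / 2) < s) (hs : s < 1 / 2) : 0 < Acoef s := by
  have hΓ : 0 < Gamma (4 - 2 * s) := Gamma_pos_of_pos (by linarith)
  have hcos : 0 < cos (s * π) := cos_pos_of_mem_Ioo ⟨by nlinarith [pi_pos], by nlinarith [pi_pos]⟩
  rw [Acoef]
  positivity

theorem stmt14_general (s : ℝ) (hs : s ∈ Set.Ioo (0 : ℝ) (1 / 2)) (ht1 : 0 < t1 s)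
    (h : ℝ) (hh : 0 < h) (N : ℕ)
    (S : Matrix (Fin (N - 1)) (Fin (N - 1)) ℝ)
    (hS : ∀ k j, S k j =
      Acoef s * h ^ (1 - 2 * s) * tFn s (((k : ℕ) : ℤ) - ((j : ℕ) : ℤ)).natAbs) :
    (0 < t1 s ∧ t1 s < 2) ∧
    (∀ k, 0 < S k k) ∧
    (∀ k j : Fin (N - 1), (((k : ℕ) : ℤ) - ((j : ℕ) : ℤ)).natAbs = 1 → 0 < S k j) ∧
    (∀ k j : Fin (N - 1), 2 ≤ (((k : ℕ) : ℤ) - ((j : ℕ) : ℤ)).natAbs → S k j < 0) ∧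
    (∀ k, -(4 * Acoef s * t1 s * h ^ (1 - 2 * s)) <
      S k k - ∑ j ∈ Finset.univ.filter (fun j => j ≠ k), |S k j|) := by
  obtain ⟨hs0, hs⟩ := hs
  have hc : 0 < Acoef s * h ^ (1 - 2 * s) :=
    mul_pos (Acoef_pos (by linarith) hs) (rpow_pos_of_pos hh _)
  have hdiag : ∀ k, S k k = Acoef s * h ^ (1 - 2 * s) * tFn s 0 := fun k => by
    rw [hS, sub_self, Int.natAbs_zero]
  refine ⟨⟨ht1, t1_lt_two hs0 hs.le⟩, fun k => ?_, fun k j hkj => ?_, fun k j hkj => ?_,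
    fun k => ?_⟩
  · rw [hdiag]
    exact mul_pos hc (tFn_zero_pos hs)
  · rw [hS, hkj, tFn_one (by linarith)]
    exact mul_pos hc ht1
  · rw [hS]
    exact mul_neg_of_pos_of_neg hc (tFn_neg hs0 hs hkj)
  · have hrow : ∑ j ∈ univ.filter (fun j => j ≠ k), |S k j| = Acoef s * h ^ (1 - 2 * s) *
        ∑ j ∈ univ.filter (fun j => j ≠ k), |tFn s (((k : ℕ) : ℤ) - ((j : ℕ) : ℤ)).natAbs| := by
      rw [mul_sum]
      exact sum_congr rfl fun j _ => by rw [hS, abs_mul, abs_of_pos hc]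
    rw [hrow, hdiag]
    nlinarith [mul_lt_mul_of_pos_left (sum_abs_tFn_row_lt hs0 hs ht1 k) hc]

theorem stmt14 (s : ℝ) (hs : s ∈ Set.Ioo (0 : ℝ) (1 / 2)) (ht1 : 0 < t1 s)
    (h : ℝ) (hh : 0 < h) (N : ℕ) (hN : 2 ≤ N)
    (S : Matrix (Fin (N - 1)) (Fin (N - 1)) ℝ)
    (hS : ∀ k j, S k j =
      Acoef s * h ^ (1 - 2 * s) * tFn s (((k : ℕ) : ℤ) - ((j : ℕ) : ℤ)).natAbs) :
    (0 < t1 s ∧ t1 s < 2) ∧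
    (∀ k, 0 < S k k) ∧
    (∀ k j : Fin (N - 1), (((k : ℕ) : ℤ) - ((j : ℕ) : ℤ)).natAbs = 1 → 0 < S k j) ∧
    (∀ k j : Fin (N - 1), 2 ≤ (((k : ℕ) : ℤ) - ((j : ℕ) : ℤ)).natAbs → S k j < 0) ∧
    (∀ k, -(4 * Acoef s * t1 s * h ^ (1 - 2 * s)) <
      S k k - ∑ j ∈ Finset.univ.filter (fun j => j ≠ k), |S k j|) :=
  stmt14_general s hs ht1 h hh N S hS
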